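/- arXiv:1502.00464 — 3 statements merged into one kernel-verified Lean document; each statement's English description precedes it below -/
import Mathlib

section
/- For every integer j ≥ 1, every integer n with 1−j ≤ n ≤ j−1, and every integer x with 0 ≤ x ≤ j−1, the symmetric Krawtchouk polynomials satisfy the difference equation j(2j−1)·K_{j+n}(2(x+1); 1/2, 2j) = −(x+1)(2x+1)·K_{j+n−1}(2x; 1/2, 2(j−1)) + (j−x−1)(2j−2x−3)·K_{j+n−1}(2(x+1); 1/2, 2(j−1)). -/
/-- The Pochhammer symbol `(a)_k = a (a+1) ⋯ (a+k-1)`. -/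
noncomputable def poch (a : ℝ) (k : ℕ) : ℝ := ∏ i ∈ Finset.range k, (a + i)

/-- The Krawtchouk polynomial `K_n(x; p, N)` defined by the terminating
hypergeometric sum `∑_{k=0}^n (−n)_k (−x)_k / ((−N)_k k!) · (1/p)^k`. -/
noncomputable def kraw (n : ℕ) (x : ℝ) (p : ℝ) (N : ℕ) : ℝ :=
  ∑ k ∈ Finset.range (n + 1),
    poch (-(n : ℝ)) k * poch (-x) k / (poch (-(N : ℝ)) k * (Nat.factorial k : ℝ)) * (1 / p) ^ k

/-!
With `N = 2j`, `y = 2x + 2` and `p = 1/2` throughout, twice the identity reads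
`N (N - 1) K_M(y; N) = -y (y - 1) K_{M-1}(y - 2; N - 2) + (N - y) (N - y - 1) K_{M-1}(y; N - 2)`.
Put `a = -M`, `b = -y`, `c = -N` and `t_k(a, b, c) = (a)_k (b)_k / ((c)_k k!) 2^k`
(`hgTerm a b c k`), so that `K_M(y; N) = ∑_{k ≤ M} t_k(a, b, c)`, while the two polynomials on the
right sum `t_k(a + 1, b + 2, c + 2)` and `t_k(a + 1, b, c + 2)` over `k < M`. By the shift rules of
the Pochhammer symbol these are rational multiples of `t_k(a, b, c)`, and `a` times the combination
of the three `k`-th terms equals `c (c + 1) ((k + 1) t_{k+1} - k t_k)`. The sum over `k < M`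
telescopes to `c (c + 1) M t_M`, and since `a = -M` this supplies exactly the top term `t_M` of the
left-hand side.
-/

open Finset Nat

lemma poch_succ (a : ℝ) (k : ℕ) : poch a (k + 1) = poch a k * (a + k) :=
  prod_range_succ _ k

lemma poch_succ' (a : ℝ) (k : ℕ) : poch a (k + 1) = a * poch (a + 1) k := by
  simp only [poch, prod_range_succ', cast_add, cast_one, cast_zero, add_zero]
  rw [mul_comm]
  congr 1
  exact prod_congr rfl fun i _ => by ring

lemma mul_poch_add_one (a : ℝ) (k : ℕ) : a * poch (a + 1) k = poch a k * (a + k) := by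
  rw [← poch_succ, poch_succ']

lemma mul_poch_add_two (a : ℝ) (k : ℕ) :
    a * (a + 1) * poch (a + 2) k = poch a k * (a + k) * (a + k + 1) := by
  have h := mul_poch_add_one (a + 1) k
  rw [add_assoc, one_add_one_eq_two] at h
  rw [mul_assoc, h, ← mul_assoc, mul_poch_add_one]
  ring

lemma poch_neg_natCast_ne_zero {N k : ℕ} (h : k ≤ N) : poch (-N) k ≠ 0 :=
  prod_ne_zero_iff.mpr fun i hi => by
    have : (i : ℝ) < N := by exact_mod_cast (mem_range.mp hi).trans_le h
    linarith

lemma poch_ne_zero_of_le {c : ℝ} {m n : ℕ} (h : poch c n ≠ 0) (hmn : m ≤ n) : poch c m ≠ 0 := by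
  rw [poch, ← prod_range_mul_prod_Ico _ hmn] at h
  exact left_ne_zero_of_mul h

noncomputable def hgTerm (a b c : ℝ) (k : ℕ) : ℝ :=
  poch a k * poch b k / (poch c k * k !) * 2 ^ k

lemma hgTerm_shift_a (a b c : ℝ) (k : ℕ) :
    a * hgTerm (a + 1) b c k = (a + k) * hgTerm a b c k := by
  unfold hgTerm
  linear_combination poch b k / (poch c k * k !) * 2 ^ k * mul_poch_add_one a k

lemma hgTerm_shift_b_two (a b c : ℝ) (k : ℕ) :
    b * (b + 1) * hgTerm a (b + 2) c k = (b + k) * (b + k + 1) * hgTerm a b c k := by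
  unfold hgTerm
  linear_combination poch a k / (poch c k * k !) * 2 ^ k * mul_poch_add_two b k

lemma hgTerm_shift_c_two (a b c : ℝ) (k : ℕ) (hc : poch c (k + 2) ≠ 0) :
    (c + k) * (c + k + 1) * hgTerm a b (c + 2) k = c * (c + 1) * hgTerm a b c k := by
  have hc0 : poch c k ≠ 0 := poch_ne_zero_of_le hc (by omega)
  rw [poch_succ', poch_succ', add_assoc, one_add_one_eq_two] at hc
  have hc2 : poch (c + 2) k ≠ 0 := right_ne_zero_of_mul (right_ne_zero_of_mul hc)
  unfold hgTerm
  field_simp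
  linear_combination -(poch a k * poch b k) * mul_poch_add_two c k

lemma hgTerm_succ (a b c : ℝ) (k : ℕ) (hc : poch c (k + 1) ≠ 0) :
    (k + 1) * (c + k) * hgTerm a b c (k + 1) = 2 * (a + k) * (b + k) * hgTerm a b c k := by
  rw [poch_succ] at hc
  have hc0 : poch c k ≠ 0 := left_ne_zero_of_mul hc
  have hck : c + k ≠ 0 := right_ne_zero_of_mul hc
  unfold hgTerm
  rw [poch_succ, poch_succ, poch_succ, factorial_succ, pow_succ]
  push_cast
  field_simp

lemma hgTerm_telescope (a b c : ℝ) (k : ℕ) (hc : poch c (k + 2) ≠ 0) :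
    a * (c * (c + 1) * hgTerm a b c k + b * (b + 1) * hgTerm (a + 1) (b + 2) (c + 2) k
        - (b - c) * (b - c - 1) * hgTerm (a + 1) b (c + 2) k)
      = c * (c + 1) * ((k + 1) * hgTerm a b c (k + 1) - k * hgTerm a b c k) := by
  have hD : (c + k) * (c + k + 1) ≠ 0 := by
    rw [poch_succ, poch_succ, mul_assoc] at hc
    push_cast at hc
    rw [← add_assoc] at hc
    exact right_ne_zero_of_mul hc
  have hC := hgTerm_shift_c_two a b c k hc
  have hS := hgTerm_succ a b c k (poch_ne_zero_of_le hc (by omega))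
  have hU : a * (b * (b + 1)) * ((c + k) * (c + k + 1)) * hgTerm (a + 1) (b + 2) (c + 2) k
      = c * (c + 1) * (a + k) * (b + k) * (b + k + 1) * hgTerm a b c k := by
    linear_combination b * (b + 1) * ((c + k) * (c + k + 1)) * hgTerm_shift_a a (b + 2) (c + 2) k
      + (a + k) * ((c + k) * (c + k + 1)) * hgTerm_shift_b_two a b (c + 2) k
      + (a + k) * (b + k) * (b + k + 1) * hC
  have hV : a * ((c + k) * (c + k + 1)) * hgTerm (a + 1) b (c + 2) k
      = c * (c + 1) * (a + k) * hgTerm a b c k := by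
    linear_combination (c + k) * (c + k + 1) * hgTerm_shift_a a b (c + 2) k + (a + k) * hC
  apply mul_left_cancel₀ hD
  linear_combination hU - (b - c) * (b - c - 1) * hV - c * (c + 1) * (c + k + 1) * hS

lemma sum_hgTerm_contiguous (m : ℕ) (b c : ℝ) (hc : poch c (m + 2) ≠ 0) :
    c * (c + 1) * ∑ k ∈ range (m + 2), hgTerm (-(m + 1)) b c k
      = -(b * (b + 1)) * ∑ k ∈ range (m + 1), hgTerm (-m) (b + 2) (c + 2) k
        + (b - c) * (b - c - 1) * ∑ k ∈ range (m + 1), hgTerm (-m) b (c + 2) k := by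
  set T := hgTerm (-(m + 1)) b c
  have htele : ∑ k ∈ range (m + 1), -((m : ℝ) + 1) * (c * (c + 1) * T k
        + b * (b + 1) * hgTerm (-m) (b + 2) (c + 2) k - (b - c) * (b - c - 1) * hgTerm (-m) b (c + 2) k)
      = c * (c + 1) * ((m + 1) * T (m + 1)) := by
    have hshift : -((m : ℝ) + 1) + 1 = -m := by ring
    calc _ = ∑ k ∈ range (m + 1), c * (c + 1) * (((k + 1 : ℕ) : ℝ) * T (k + 1) - k * T k) := by
          refine sum_congr rfl fun k hk => ?_
          have := hgTerm_telescope (-(m + 1)) b c k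
            (poch_ne_zero_of_le hc (by simp at hk; omega))
          rw [hshift] at this
          push_cast
          exact this
      _ = c * (c + 1) * ((m + 1) * T (m + 1)) := by
          rw [← mul_sum, sum_range_sub (fun k => (k : ℝ) * T k)]
          push_cast
          ring
  rw [← mul_sum, sum_sub_distrib, sum_add_distrib, ← mul_sum, ← mul_sum, ← mul_sum] at htele
  have hm : -((m : ℝ) + 1) ≠ 0 := neg_ne_zero.mpr (by positivity)
  rw [sum_range_succ]
  apply mul_left_cancel₀ hm
  linear_combination htele

lemma kraw_half_eq_sum (M N : ℕ) (y : ℝ) :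
    kraw M y (1 / 2) N = ∑ k ∈ range (M + 1), hgTerm (-M) (-y) (-N) k := by
  simp only [kraw, hgTerm, one_div_one_div]

theorem kraw_half_contiguous {M N : ℕ} (hMN : M ≤ N) (y : ℝ) :
    ((N : ℝ) + 2) * (N + 1) * kraw (M + 1) y (1 / 2) (N + 2)
      = -(y * (y - 1)) * kraw M (y - 2) (1 / 2) N
        + (N + 2 - y) * (N + 1 - y) * kraw M y (1 / 2) N := by
  have hc : poch (-((N + 2 : ℕ) : ℝ)) (M + 2) ≠ 0 := poch_neg_natCast_ne_zero (by omega)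
  have key := sum_hgTerm_contiguous M (-y) _ hc
  simp only [kraw_half_eq_sum]
  push_cast at key ⊢
  rw [show -((N : ℝ) + 2) + 2 = -N by ring, show -y + 2 = -(y - 2) by ring] at key
  linear_combination key

theorem stmt0_general (j n x : ℤ) (hn1 : 1 - j ≤ n) (hn2 : n ≤ j - 1) :
    (j : ℝ) * (2 * (j : ℝ) - 1) * kraw (j + n).toNat (2 * ((x : ℝ) + 1)) (1/2) (2 * j).toNat
      = -((x : ℝ) + 1) * (2 * (x : ℝ) + 1) *
          kraw (j + n - 1).toNat (2 * (x : ℝ)) (1/2) (2 * (j - 1)).toNat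
        + ((j : ℝ) - (x : ℝ) - 1) * (2 * (j : ℝ) - 2 * (x : ℝ) - 3) *
          kraw (j + n - 1).toNat (2 * ((x : ℝ) + 1)) (1/2) (2 * (j - 1)).toNat := by
  obtain ⟨M, hM⟩ : ∃ M : ℕ, j + n - 1 = M := ⟨_, (Int.toNat_of_nonneg (by omega)).symm⟩
  obtain ⟨N, hN⟩ : ∃ N : ℕ, 2 * (j - 1) = N := ⟨_, (Int.toNat_of_nonneg (by omega)).symm⟩
  have hjN : (N : ℝ) = 2 * j - 2 := by
    rw [← Int.cast_natCast, ← hN]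
    push_cast
    ring
  rw [show (j + n).toNat = M + 1 by omega, show (j + n - 1).toNat = M by omega,
    show (2 * j).toNat = N + 2 by omega, show (2 * (j - 1)).toNat = N by omega]
  have key := kraw_half_contiguous (show M ≤ N by omega) (2 * ((x : ℝ) + 1))
  rw [show 2 * ((x : ℝ) + 1) - 2 = 2 * x by ring, hjN] at key
  linear_combination key / 2

theorem stmt0 (j n x : ℤ) (hj : 1 ≤ j) (hn1 : 1 - j ≤ n) (hn2 : n ≤ j - 1)
    (hx1 : 0 ≤ x) (hx2 : x ≤ j - 1) :
    (j : ℝ) * (2 * (j : ℝ) - 1) * kraw (j + n).toNat (2 * ((x : ℝ) + 1)) (1/2) (2 * j).toNat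
      = -((x : ℝ) + 1) * (2 * (x : ℝ) + 1) *
          kraw (j + n - 1).toNat (2 * (x : ℝ)) (1/2) (2 * (j - 1)).toNat
        + ((j : ℝ) - (x : ℝ) - 1) * (2 * (j : ℝ) - 2 * (x : ℝ) - 3) *
          kraw (j + n - 1).toNat (2 * ((x : ℝ) + 1)) (1/2) (2 * (j - 1)).toNat :=
  stmt0_general j n x hn1 hn2
end

section
/- For every integer N ≥ 1 and all integers n, n' with 0 ≤ n, n' ≤ N, the symmetric Krawtchouk polynomials evaluated at even arguments satisfy the orthogonality relation Σ_{x=0}^{N} 2^{−(2N−1)} · C(2N, n) · C(2N, 2x) · K_n(2x; 1/2, 2N) · K_{n'}(2x; 1/2, 2N) = δ_{n,n'} if n ≠ N, and = 2·δ_{n,n'} if n = N, where C(a, b) denotes the binomial coefficient. -/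
/-!
`C(M, a) K_a(x; 1/2, M)` is the coefficient of `t^a` in `(1 - t)^x (1 + t)^(M - x)`. Weighting the
product of two such generating functions by `C(M, x) ε^x` and summing over `x`, the binomial theorem
gives `(ε (1 - t)(1 - u) + (1 + t)(1 + u))^M`, that is `(2 + 2tu)^M` for `ε = 1` and `(2t + 2u)^M`
for `ε = -1`. Comparing coefficients of `t^a u^b` yields `∑ C(M, x) K_a K_b = δ_{a,b} 2^M / C(M, a)`
and its alternating twin with `δ_{a+b,M}`. The sum over even `x` is half the sum of the two, and for
`M = 2N` and `a, b ≤ N` the twin contributes only when `a = b = N`.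
-/

open Polynomial Finset

lemma poch_neg_natCast (m k : ℕ) : poch (-m) k = (-1) ^ k * m.descFactorial k := by
  induction k with
  | zero => simp [poch]
  | succ k ih =>
    rw [poch, prod_range_succ, ← poch, ih, Nat.descFactorial_succ]
    rcases le_or_gt k m with h | h
    · push_cast [h]; ring
    · simp [Nat.descFactorial_eq_zero_iff_lt.2 h]

lemma kraw_half_natCast_eq_sum {a M : ℕ} (x : ℕ) (ha : a ≤ M) :
    kraw a x (1 / 2) M =
      ∑ k ∈ range (a + 1), (-2 : ℝ) ^ k * a.choose k * x.choose k / M.choose k := by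
  refine sum_congr rfl fun k hk ↦ ?_
  have hkM : k ≤ M := by grind
  have hM : (M.choose k : ℝ) ≠ 0 := by exact_mod_cast (Nat.choose_pos hkM).ne'
  simp only [poch_neg_natCast, Nat.descFactorial_eq_factorial_mul_choose, Nat.cast_mul]
  field_simp
  rw [neg_pow 2]
  ring

section GeneratingFunction

variable {R : Type*} [CommRing R]

variable (R) in
noncomputable def krawGen (M x : ℕ) : R[X] := (1 - X) ^ x * (1 + X) ^ (M - x)

lemma coeff_krawGen {M x : ℕ} (a : ℕ) (hx : x ≤ M) :
    (krawGen R M x).coeff a = ∑ k ∈ range (x + 1),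
      (-2 : R) ^ k * x.choose k * if k ≤ a then ((M - k).choose (a - k) : R) else 0 := by
  have hsplit : (1 - X : R[X]) = C (-2) * X + (1 + X) := by rw [map_neg, map_ofNat]; ring
  rw [krawGen, hsplit, add_pow, sum_mul, finsetSum_coeff]
  refine sum_congr rfl fun k hk ↦ ?_
  have hpow : (1 + X : R[X]) ^ (x - k) * (1 + X) ^ (M - x) = (1 + X) ^ (M - k) := by
    rw [← pow_add]; congr 1; grind
  calc _ = (C ((-2 : R) ^ k * x.choose k) * (X ^ k * (1 + X) ^ (M - k))).coeff a := by
        rw [← hpow, mul_pow, C_mul, C_pow, map_natCast]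
        congr 1; ring
    _ = _ := by rw [coeff_C_mul, coeff_X_pow_mul', coeff_one_add_X_pow]

-- A bivariate polynomial `F(t, u)` is an element of `R[X][X]` with `t = X` and `u = C X`;
-- thus `p.map C * C q` is `p(t) q(u)`, and `(F.coeff a).coeff b` is its coefficient of `t^a u^b`.
lemma coeff_coeff_map_C_mul_C (p q : R[X]) (a b : ℕ) :
    ((p.map C * C q).coeff a).coeff b = p.coeff a * q.coeff b := by
  rw [coeff_mul_C, coeff_map, coeff_C_mul]

lemma coeff_coeff_sum_map_C_mul_C_X_pow {s : Finset ℕ} {a : ℕ} (c : ℕ → R) (e : ℕ → ℕ)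
    (ha : a ∈ s) (b : ℕ) :
    ((∑ k ∈ s, (C (c k) * X ^ k).map C * C (X ^ e k)).coeff a).coeff b =
      if b = e a then c a else 0 := by
  simp only [finsetSum_coeff, coeff_coeff_map_C_mul_C, coeff_C_mul_X_pow, coeff_X_pow, ite_mul,
    zero_mul]
  rw [sum_ite_eq, if_pos ha, mul_ite, mul_one, mul_zero]

lemma sum_map_C_mul_C_krawGen (ε : R) (M : ℕ) :
    ∑ x ∈ range (M + 1), (C (ε ^ x * M.choose x) * krawGen R M x).map C * C (krawGen R M x) =
      (C (C ε) * ((1 - X) * (1 - C X)) + (1 + X) * (1 + C X)) ^ M := by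
  rw [add_pow]
  refine sum_congr rfl fun x _ ↦ ?_
  simp only [mul_pow, krawGen, Polynomial.map_mul, Polynomial.map_pow, map_C,
    Polynomial.map_natCast, Polynomial.map_sub, Polynomial.map_add, Polynomial.map_one, map_X,
    map_mul, map_pow, map_natCast, map_sub, map_add, map_one]
  ring

lemma sum_pow_mul_choose_mul_coeff_krawGen (ε : R) (M a b : ℕ) :
    ∑ x ∈ range (M + 1), ε ^ x * M.choose x * (krawGen R M x).coeff a * (krawGen R M x).coeff b =
      (((C (C ε) * ((1 - X) * (1 - C X)) + (1 + X) * (1 + C X)) ^ M).coeff a).coeff b := by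
  rw [← sum_map_C_mul_C_krawGen, finsetSum_coeff, finsetSum_coeff]
  refine sum_congr rfl fun x _ ↦ ?_
  rw [coeff_coeff_map_C_mul_C, coeff_C_mul]

lemma two_mul_one_add_X_mul_C_X_pow (M : ℕ) :
    (2 * (1 + X * C X) : R[X][X]) ^ M =
      ∑ k ∈ range (M + 1), (C (2 ^ M * M.choose k : R) * X ^ k).map C * C (X ^ k) := by
  rw [mul_pow, add_comm, add_pow, mul_sum]
  refine sum_congr rfl fun k _ ↦ ?_
  simp only [Polynomial.map_mul, Polynomial.map_pow, Polynomial.map_natCast, Polynomial.map_ofNat,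
    map_X, map_mul, map_pow, map_natCast, map_ofNat]
  ring

lemma two_mul_X_add_C_X_pow (M : ℕ) :
    (2 * (X + C X) : R[X][X]) ^ M =
      ∑ k ∈ range (M + 1), (C (2 ^ M * M.choose k : R) * X ^ k).map C * C (X ^ (M - k)) := by
  rw [mul_pow, add_pow, mul_sum]
  refine sum_congr rfl fun k _ ↦ ?_
  simp only [Polynomial.map_mul, Polynomial.map_pow, Polynomial.map_natCast, Polynomial.map_ofNat,
    map_X, map_mul, map_pow, map_natCast, map_ofNat]
  ring

end GeneratingFunction

lemma choose_mul_kraw_half_eq_coeff_krawGen {a M : ℕ} (x : ℕ) (ha : a ≤ M) (hx : x ≤ M) :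
    M.choose a * kraw a x (1 / 2) M = (krawGen ℝ M x).coeff a := by
  rw [kraw_half_natCast_eq_sum x ha, coeff_krawGen a hx, mul_sum]
  rw [sum_subset (range_subset_range.2 (by omega : a + 1 ≤ M + 1)) fun k _ hk ↦ by
      simp [Nat.choose_eq_zero_of_lt (by simpa using hk : a < k)],
    sum_subset (range_subset_range.2 (by omega : x + 1 ≤ M + 1)) fun k _ hk ↦ by
      simp [Nat.choose_eq_zero_of_lt (by simpa using hk : x < k)]]
  refine sum_congr rfl fun k hk ↦ ?_
  have hM : (M.choose k : ℝ) ≠ 0 := by exact_mod_cast (Nat.choose_pos (by grind)).ne'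
  split_ifs with hka
  · have hchoose : (M.choose a * a.choose k : ℝ) = M.choose k * (M - k).choose (a - k) := by
      exact_mod_cast Nat.choose_mul hka
    rw [mul_div_assoc', div_eq_iff hM]
    linear_combination (-2 : ℝ) ^ k * x.choose k * hchoose
  · simp [Nat.choose_eq_zero_of_lt (not_le.1 hka)]

lemma sum_pow_mul_choose_mul_kraw_mul_kraw (ε : ℝ) {M a b : ℕ} (ha : a ≤ M) (hb : b ≤ M) :
    ∑ x ∈ range (M + 1), ε ^ x * M.choose x * kraw a x (1 / 2) M * kraw b x (1 / 2) M =
      (((C (C ε) * ((1 - X) * (1 - C X)) + (1 + X) * (1 + C X)) ^ M).coeff a).coeff b /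
        (M.choose a * M.choose b) := by
  have hMa : (M.choose a : ℝ) ≠ 0 := by exact_mod_cast (Nat.choose_pos ha).ne'
  have hMb : (M.choose b : ℝ) ≠ 0 := by exact_mod_cast (Nat.choose_pos hb).ne'
  rw [← sum_pow_mul_choose_mul_coeff_krawGen, sum_div]
  refine sum_congr rfl fun x hx ↦ ?_
  have hxM : x ≤ M := Nat.lt_succ_iff.1 (mem_range.1 hx)
  rw [← choose_mul_kraw_half_eq_coeff_krawGen x ha hxM,
    ← choose_mul_kraw_half_eq_coeff_krawGen x hb hxM]
  field_simp

theorem kraw_half_orthogonality {M a b : ℕ} (ha : a ≤ M) (hb : b ≤ M) :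
    ∑ x ∈ range (M + 1), (M.choose x : ℝ) * kraw a x (1 / 2) M * kraw b x (1 / 2) M =
      if a = b then (2 : ℝ) ^ M / M.choose a else 0 := by
  have hMa : (M.choose a : ℝ) ≠ 0 := by exact_mod_cast (Nat.choose_pos ha).ne'
  have hgen : (C (C 1) * ((1 - X) * (1 - C X)) + (1 + X) * (1 + C X) : ℝ[X][X]) =
      2 * (1 + X * C X) := by simp only [map_one]; ring
  have := sum_pow_mul_choose_mul_kraw_mul_kraw 1 ha hb
  rw [hgen, two_mul_one_add_X_mul_C_X_pow,
    coeff_coeff_sum_map_C_mul_C_X_pow _ _ (mem_range.2 (Nat.lt_succ_of_le ha))] at this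
  simp only [one_pow, one_mul] at this
  rw [this]
  obtain rfl | h := eq_or_ne a b
  · rw [if_pos rfl, if_pos rfl]; field_simp
  · rw [if_neg h.symm, if_neg h, zero_div]

theorem kraw_half_orthogonality_alternating {M a b : ℕ} (ha : a ≤ M) (hb : b ≤ M) :
    ∑ x ∈ range (M + 1), (-1 : ℝ) ^ x * M.choose x * kraw a x (1 / 2) M * kraw b x (1 / 2) M =
      if a + b = M then (2 : ℝ) ^ M / M.choose a else 0 := by
  have hMa : (M.choose a : ℝ) ≠ 0 := by exact_mod_cast (Nat.choose_pos ha).ne'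
  have hgen : (C (C (-1)) * ((1 - X) * (1 - C X)) + (1 + X) * (1 + C X) : ℝ[X][X]) =
      2 * (X + C X) := by simp only [map_neg, map_one]; ring
  have := sum_pow_mul_choose_mul_kraw_mul_kraw (-1) ha hb
  rw [hgen, two_mul_X_add_C_X_pow,
    coeff_coeff_sum_map_C_mul_C_X_pow _ _ (mem_range.2 (Nat.lt_succ_of_le ha))] at this
  rw [this]
  by_cases h : a + b = M
  · rw [if_pos (by omega), if_pos h, ← h, Nat.choose_symm_add]; field_simp
  · rw [if_neg (by omega), if_neg h, zero_div]

lemma two_mul_sum_range_even_terms {R : Type*} [Ring R] (f : ℕ → R) (N : ℕ) :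
    2 * ∑ x ∈ range (N + 1), f (2 * x) =
      ∑ y ∈ range (2 * N + 1), f y + ∑ y ∈ range (2 * N + 1), (-1) ^ y * f y := by
  induction N with
  | zero => simp [two_mul]
  | succ N ih =>
    have hodd : (-1 : R) ^ (2 * N + 1) = -1 := Odd.neg_one_pow ⟨N, rfl⟩
    have heven : (-1 : R) ^ (2 * N + 1 + 1) = 1 := by rw [pow_succ, hodd, neg_one_mul, neg_neg]
    rw [show 2 * (N + 1) + 1 = 2 * N + 1 + 1 + 1 by ring, sum_range_succ _ (N + 1),
      sum_range_succ f (2 * N + 1 + 1), sum_range_succ f (2 * N + 1),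
      sum_range_succ (fun y ↦ (-1 : R) ^ y * f y) (2 * N + 1 + 1),
      sum_range_succ (fun y ↦ (-1 : R) ^ y * f y) (2 * N + 1), mul_add, ih,
      show 2 * (N + 1) = 2 * N + 1 + 1 by ring, hodd, heven, neg_one_mul, one_mul]
    simp only [two_mul]
    abel

theorem stmt5 (N n n' : ℕ) (hN : 1 ≤ N) (hn : n ≤ N) (hn' : n' ≤ N) :
    ∑ x ∈ Finset.range (N + 1),
        ((2 : ℝ) ^ (2 * N - 1))⁻¹ * (Nat.choose (2 * N) n : ℝ) * (Nat.choose (2 * N) (2 * x) : ℝ) *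
          kraw n (2 * (x : ℝ)) (1/2) (2 * N) * kraw n' (2 * (x : ℝ)) (1/2) (2 * N)
      = if n = N then (if n = n' then 2 else 0) else (if n = n' then 1 else 0) := by
  have hchoose : ((2 * N).choose n : ℝ) ≠ 0 := by exact_mod_cast (Nat.choose_pos (by omega)).ne'
  have hpow : (2 : ℝ) ^ (2 * N) = 2 * 2 ^ (2 * N - 1) := by rw [← pow_succ']; congr 1; omega
  have heven := two_mul_sum_range_even_terms
    (fun y ↦ ((2 * N).choose y : ℝ) * kraw n y (1 / 2) (2 * N) * kraw n' y (1 / 2) (2 * N)) N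
  simp_rw [← mul_assoc] at heven
  rw [kraw_half_orthogonality (by omega) (by omega),
    kraw_half_orthogonality_alternating (by omega) (by omega), hpow] at heven
  push_cast at heven
  set E := ∑ x ∈ range (N + 1),
    ((2 * N).choose (2 * x) : ℝ) * kraw n (2 * x) (1 / 2) (2 * N) * kraw n' (2 * x) (1 / 2) (2 * N)
  calc _ = ((2 : ℝ) ^ (2 * N - 1))⁻¹ * (2 * N).choose n * E := by
        rw [mul_sum]; exact sum_congr rfl fun x _ ↦ by ring
    _ = ((2 : ℝ) ^ (2 * N - 1))⁻¹ * (2 * N).choose n * (2 * E) / 2 := by ring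
    _ = _ := by
      rw [heven]
      split_ifs <;> first | (exfalso; omega) | (field_simp; norm_num)
end

section
/- For every integer j ≥ 1, the matrices J₊, J₋ = J₊ᵀ, J₀, P, and C = 2j·I satisfy the deformed commutation relation [J₊, J₋] = J₊J₋ − J₋J₊ = 2J₀(CP − I), where I is the (2j+1)×(2j+1) identity matrix. -/
/-- The diagonal matrix `J₀` with entries `(J₀)_{m,m} = m`, rows and columns indexed by
`m = (index) - j ∈ {-j, …, j}`. -/
noncomputable def J0 (j : ℕ) : Matrix (Fin (2 * j + 1)) (Fin (2 * j + 1)) ℝ :=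
  Matrix.diagonal fun k => ((k : ℕ) : ℝ) - (j : ℝ)

/-- The raising matrix `J₊` whose only nonzero entries are
`(J₊)_{m+1,m} = √((j−m)(j−m−1))` if `j+m` is even and `√((j+m)(j+m+1))` if `j+m` is odd,
where `m = (column index) - j`. -/
noncomputable def Jp (j : ℕ) : Matrix (Fin (2 * j + 1)) (Fin (2 * j + 1)) ℝ :=
  fun k l =>
    if (k : ℕ) = (l : ℕ) + 1 then
      if Even ((j : ℤ) + ((l : ℕ) - (j : ℤ))) then
        Real.sqrt (((j : ℝ) - (((l : ℕ) : ℝ) - (j : ℝ))) * ((j : ℝ) - (((l : ℕ) : ℝ) - (j : ℝ)) - 1))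
      else
        Real.sqrt (((j : ℝ) + (((l : ℕ) : ℝ) - (j : ℝ))) * ((j : ℝ) + (((l : ℕ) : ℝ) - (j : ℝ)) + 1))
    else 0

/-- The parity matrix `P`, diagonal with entries `(P)_{m,m} = (-1)^{j+m}`. -/
noncomputable def Pmat (j : ℕ) : Matrix (Fin (2 * j + 1)) (Fin (2 * j + 1)) ℝ :=
  Matrix.diagonal fun k => (-1 : ℝ) ^ ((j : ℤ) + ((k : ℕ) - (j : ℤ)))

open Matrix

/-- squared entry function -/
noncomputable def gg (j l : ℕ) : ℝ :=
  if Even l then ((2 * j : ℝ) - l) * ((2 * j : ℝ) - l - 1) else (l : ℝ) * ((l : ℝ) + 1)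

lemma Jp_mul_self (j : ℕ) (k l : Fin (2 * j + 1)) :
    Jp j k l * Jp j k l = if (k : ℕ) = (l : ℕ) + 1 then gg j (l : ℕ) else 0 := by
  have hpar : Even ((j : ℤ) + ((l : ℕ) - (j : ℤ))) ↔ Even (l : ℕ) := by
    have : (j : ℤ) + ((l : ℕ) - (j : ℤ)) = ((l : ℕ) : ℤ) := by ring
    rw [this, Int.even_coe_nat]
  have hl : (l : ℕ) ≤ 2 * j := by omega
  by_cases h1 : (k : ℕ) = (l : ℕ) + 1
  · rw [if_pos h1]
    unfold Jp
    rw [if_pos h1]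
    by_cases h2 : Even ((j : ℤ) + ((l : ℕ) - (j : ℤ)))
    · rw [if_pos h2]
      unfold gg
      rw [if_pos (hpar.mp h2), Real.mul_self_sqrt]
      · ring
      · have hc : ((j : ℝ) - (((l : ℕ) : ℝ) - (j : ℝ))) = ((2 * j - (l : ℕ) : ℕ) : ℝ) := by
          push_cast [Nat.cast_sub hl]; ring
        rw [hc]
        rcases Nat.eq_zero_or_pos (2 * j - (l : ℕ)) with h | h
        · simp [h]
        · have : (1 : ℝ) ≤ ((2 * j - (l : ℕ) : ℕ) : ℝ) := by exact_mod_cast h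
          nlinarith
    · rw [if_neg h2]
      unfold gg
      rw [if_neg (fun h => h2 (hpar.mpr h)), Real.mul_self_sqrt]
      · ring
      · have : ((j : ℝ) + (((l : ℕ) : ℝ) - (j : ℝ))) = ((l : ℕ) : ℝ) := by ring
        rw [this]
        positivity
  · simp [Jp, h1]

lemma Jp_mul_ne (j : ℕ) (k l m : Fin (2 * j + 1)) (h : k ≠ l) :
    Jp j k m * Jp j l m = 0 := by
  by_cases h1 : (k : ℕ) = (m : ℕ) + 1
  · by_cases h2 : (l : ℕ) = (m : ℕ) + 1
    · exact absurd (Fin.ext (h1.trans h2.symm)) h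
    · simp [Jp, h2]
  · simp [Jp, h1]

lemma gg_top (j : ℕ) : gg j (2 * j) = 0 := by
  simp [gg, even_two_mul]

lemma JpT_mul_Jp (j : ℕ) :
    (Jp j)ᵀ * Jp j = Matrix.diagonal fun k : Fin (2 * j + 1) => gg j (k : ℕ) := by
  ext k l
  rw [Matrix.mul_apply]
  simp only [Matrix.transpose_apply]
  by_cases hkl : k = l
  · subst hkl
    simp only [Matrix.diagonal_apply_eq]
    by_cases hk : (k : ℕ) < 2 * j
    · rw [Finset.sum_eq_single (⟨(k : ℕ) + 1, by omega⟩ : Fin (2 * j + 1))]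
      · rw [Jp_mul_self]; simp
      · intro b _ hb
        rw [Jp_mul_self]
        have : ¬ ((b : ℕ) = (k : ℕ) + 1) := by
          intro h; exact hb (Fin.ext (by simp [h]))
        simp [this]
      · intro h; exact absurd (Finset.mem_univ _) h
    · have hk' : (k : ℕ) = 2 * j := by omega
      rw [Finset.sum_eq_zero, hk', gg_top]
      intro m _
      rw [Jp_mul_self]
      have : ¬ ((m : ℕ) = (k : ℕ) + 1) := by omega
      simp [this]
  · rw [Matrix.diagonal_apply_ne _ hkl, Finset.sum_eq_zero]
    intro m _
    by_cases h1 : (m : ℕ) = (k : ℕ) + 1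
    · by_cases h2 : (m : ℕ) = (l : ℕ) + 1
      · exact absurd (Fin.ext (by omega : (k : ℕ) = (l : ℕ))) hkl
      · simp [Jp, h2]
    · simp [Jp, h1]

lemma Jp_mul_JpT (j : ℕ) :
    Jp j * (Jp j)ᵀ = Matrix.diagonal fun k : Fin (2 * j + 1) =>
      if (k : ℕ) = 0 then 0 else gg j ((k : ℕ) - 1) := by
  ext k l
  rw [Matrix.mul_apply]
  simp only [Matrix.transpose_apply]
  by_cases hkl : k = l
  · subst hkl
    simp only [Matrix.diagonal_apply_eq]
    by_cases hk : (k : ℕ) = 0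
    · rw [Finset.sum_eq_zero]
      · simp [hk]
      · intro m _
        rw [Jp_mul_self]
        have : ¬ ((k : ℕ) = (m : ℕ) + 1) := by omega
        simp [this]
    · rw [Finset.sum_eq_single (⟨(k : ℕ) - 1, by omega⟩ : Fin (2 * j + 1))]
      · rw [Jp_mul_self]
        have h1 : (k : ℕ) = ((⟨(k : ℕ) - 1, by omega⟩ : Fin (2 * j + 1)) : ℕ) + 1 := by
          simp; omega
        simp only [if_pos h1, if_neg hk]
      · intro b _ hb
        rw [Jp_mul_self]
        have : ¬ ((k : ℕ) = (b : ℕ) + 1) := by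
          intro h; exact hb (Fin.ext (by simp; omega))
        simp [this]
      · intro h; exact absurd (Finset.mem_univ _) h
  · rw [Matrix.diagonal_apply_ne _ hkl, Finset.sum_eq_zero]
    intro m _
    exact Jp_mul_ne j k l m hkl

lemma smul_one_eq_diag (n : ℕ) (r : ℝ) :
    (r • (1 : Matrix (Fin n) (Fin n) ℝ)) = Matrix.diagonal (fun _ => r) := by
  ext k l
  by_cases h : k = l <;> simp [Matrix.one_apply, Matrix.diagonal, h]

open Matrix in
theorem stmt7 (j : ℕ) (hj : 1 ≤ j) :
    Jp j * (Jp j)ᵀ - (Jp j)ᵀ * Jp j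
      = (2 : ℝ) • (J0 j * (((2 * j : ℝ) • (1 : Matrix (Fin (2 * j + 1)) (Fin (2 * j + 1)) ℝ)) * Pmat j
          - 1)) := by
  rw [Jp_mul_JpT, JpT_mul_Jp, Matrix.smul_mul, one_mul]
  ext k l
  rcases eq_or_ne k l with rfl | hkl
  · simp only [Matrix.sub_apply, Matrix.diagonal_apply_eq, Matrix.smul_apply, J0, Pmat,
      Matrix.diagonal_mul, Matrix.one_apply_eq, smul_eq_mul]
    have hzp : (-1 : ℝ) ^ ((j : ℤ) + ((k : ℕ) - (j : ℤ))) = (-1 : ℝ) ^ (k : ℕ) := by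
      have hexp : (j : ℤ) + ((k : ℕ) - (j : ℤ)) = ((k : ℕ) : ℤ) := by ring
      rw [hexp, zpow_natCast]
    rw [hzp]
    obtain ⟨kv, hkv⟩ := k
    simp only [Fin.val_mk]
    rcases Nat.eq_zero_or_pos kv with h0 | h0
    · subst h0
      rw [if_pos rfl, pow_zero]
      unfold gg
      rw [if_pos (Even.zero)]
      push_cast
      ring
    · obtain ⟨n, rfl⟩ : ∃ n, kv = n + 1 := ⟨kv - 1, by omega⟩
      rw [if_neg (by omega), Nat.add_sub_cancel]
      rcases Nat.even_or_odd n with hn | hn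
      · have hodd : Odd (n + 1) := Even.add_one hn
        rw [Odd.neg_one_pow hodd]
        unfold gg
        rw [if_pos hn, if_neg (by simpa using hodd)]
        push_cast
        ring
      · have heven : Even (n + 1) := Odd.add_one hn
        rw [Even.neg_one_pow heven]
        unfold gg
        rw [if_neg (by simpa using hn), if_pos heven]
        push_cast
        ring
  · simp [Matrix.diagonal_apply_ne _ hkl, Matrix.one_apply_ne hkl, J0, Pmat,
      Matrix.diagonal_mul]
end
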